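/- arXiv:2405.14176 — 2 statements merged into one kernel-verified Lean document; each statement's English description precedes it below -/
import Mathlib

section
/- Robustness certificate for the nearest-box classifier: Let B₁,…,B_M ⊆ ℝⁿ be nonempty sets with labels y₁,…,y_M, and for x ∈ ℝⁿ let m* minimize dist(x, B_m) over all m (with respect to Hamming distance). Set d₁ = dist(x, B_{m*}) and d₂ = min over m with y_m ≠ y_{m*} of dist(x, B_m), and margin(x) = d₂ - d₁. Then for any x' with d₀(x,x') < margin(x)/2, every minimizer m' of dist(x', B_m) satisfies y_{m'} = y_{m*}; i.e., the predicted label at x' equals the predicted label at x. -/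
/-- Hamming distance from a point to a set. -/
noncomputable def hammingDistSet {n : ℕ} (x : Fin n → ℝ) (S : Set (Fin n → ℝ)) : ℕ :=
  sInf {d : ℕ | ∃ s ∈ S, d = hammingDist x s}

lemma hammingDistSet_le {n : ℕ} (x : Fin n → ℝ) (S : Set (Fin n → ℝ)) {s : Fin n → ℝ}
    (hs : s ∈ S) : hammingDistSet x S ≤ hammingDist x s :=
  Nat.sInf_le ⟨s, hs, rfl⟩

lemma hammingDistSet_exists {n : ℕ} (x : Fin n → ℝ) (S : Set (Fin n → ℝ))
    (hS : S.Nonempty) : ∃ s ∈ S, hammingDistSet x S = hammingDist x s := by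
  obtain ⟨s₀, hs₀⟩ := hS
  have h : hammingDistSet x S ∈ {d : ℕ | ∃ s ∈ S, d = hammingDist x s} :=
    Nat.sInf_mem ⟨_, s₀, hs₀, rfl⟩
  exact h

lemma hammingDistSet_triangle {n : ℕ} (x x' : Fin n → ℝ) (S : Set (Fin n → ℝ))
    (hS : S.Nonempty) :
    hammingDistSet x' S ≤ hammingDistSet x S + hammingDist x x' := by
  obtain ⟨s, hs, heq⟩ := hammingDistSet_exists x S hS
  calc hammingDistSet x' S ≤ hammingDist x' s := hammingDistSet_le x' S hs
    _ ≤ hammingDist x' x + hammingDist x s := hammingDist_triangle x' x s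
    _ = hammingDistSet x S + hammingDist x x' := by
        rw [heq, hammingDist_comm, Nat.add_comm]

/-- Robustness certificate for the nearest-box classifier: if
`d₀(x,x') < (d₂ - d₁)/2`, then every minimizer `m'` of `dist(x', B m)` carries
the same label as the nearest box `m⋆` to `x`. -/
theorem boxNN_certificate (n M : ℕ) (B : Fin M → Set (Fin n → ℝ))
    (hB : ∀ m, (B m).Nonempty) (y : Fin M → ℕ) (x : Fin n → ℝ)
    (mstar : Fin M) (hmstar : ∀ m, hammingDistSet x (B mstar) ≤ hammingDistSet x (B m))
    (hne : ∃ m, y m ≠ y mstar)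
    (d₁ d₂ : ℕ) (hd₁ : d₁ = hammingDistSet x (B mstar))
    (hd₂ : d₂ = sInf {d : ℕ | ∃ m, y m ≠ y mstar ∧ d = hammingDistSet x (B m)})
    (x' : Fin n → ℝ) (hclose : (hammingDist x x' : ℝ) < ((d₂ : ℝ) - d₁) / 2)
    (m' : Fin M) (hm' : ∀ m, hammingDistSet x' (B m') ≤ hammingDistSet x' (B m)) :
    y m' = y mstar := by
  by_contra hy
  set δ := hammingDist x x' with hδ
  -- d₂ ≤ dist(x, B m')
  have h2 : d₂ ≤ hammingDistSet x (B m') := by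
    rw [hd₂]; exact Nat.sInf_le ⟨m', hy, rfl⟩
  -- dist(x, B m') ≤ dist(x', B m') + δ ≤ dist(x', B mstar) + δ ≤ d₁ + 2δ
  have h3 : hammingDistSet x (B m') ≤ d₁ + 2 * δ := by
    calc hammingDistSet x (B m')
        ≤ hammingDistSet x' (B m') + hammingDist x' x :=
          hammingDistSet_triangle x' x (B m') (hB m')
      _ ≤ hammingDistSet x' (B mstar) + hammingDist x' x := by
          exact Nat.add_le_add_right (hm' mstar) _
      _ ≤ (hammingDistSet x (B mstar) + hammingDist x x') + hammingDist x' x :=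
          Nat.add_le_add_right (hammingDistSet_triangle x x' (B mstar) (hB mstar)) _
      _ = d₁ + 2 * δ := by rw [hd₁, hammingDist_comm x' x]; ring
  have : (d₂ : ℝ) ≤ (d₁ : ℝ) + 2 * δ := by
    exact_mod_cast h2.trans h3
  linarith
end

section
/- Strong localization implies robustness (abstract set/measure version): Let X be a measurable space with distance d, let q₁,…,q_K be probability measures on X, and suppose there exist measurable sets S₁,…,S_K ⊆ X with q_k(S_k) ≥ 1 - δ and q_k(⋃_{k'≠k} S_{k'}^{+2ε}) ≤ γ for every k. Define C_k = S_k^{+ε} \ ⋃_{k'≠k} S_{k'}^{+ε} and a classifier f with f(x) = k if x ∈ C_k (and f(x) = 1 otherwise; the C_k are pairwise disjoint). Then for each class k, the q_k-measure of the unsafe set U_k = {x : ∃ x' with d(x,x') ≤ ε and f(x') ≠ k} is at most δ + γ. -/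
/-!
If `x ∈ S k` is `2ε`-far from every other `S k'`, then each `x'` with `d x x' ≤ ε` lies in
`C k`: symmetry puts it in the `ε`-expansion of `S k`, and the triangle inequality keeps it out
of the `ε`-expansion of every `S k'`. Hence the unsafe set is covered by `(S k)ᶜ`, of mass at
most `δ`, together with the `2ε`-expansion of the other sets, of mass at most `γ`.
-/

open MeasureTheory

/-- ε-expansion of a set with respect to a distance-like function. -/
def expandSet {X : Type*} (d : X → X → NNReal) (ε : NNReal) (A : Set X) : Set X :=
  {x : X | ∃ a ∈ A, d x a ≤ ε}

section expandSet

variable {X : Type*} {d : X → X → NNReal} {A : Set X} {ε ε' : NNReal} {x y : X}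

theorem mem_expandSet_of_mem (hsymm : ∀ x y, d x y = d y x) (hx : x ∈ A) (hxy : d x y ≤ ε) :
    y ∈ expandSet d ε A :=
  ⟨x, hx, hsymm y x ▸ hxy⟩

theorem mem_expandSet_add (htri : ∀ x y z, d x z ≤ d x y + d y z) (hxy : d x y ≤ ε)
    (hy : y ∈ expandSet d ε' A) : x ∈ expandSet d (ε + ε') A := by
  obtain ⟨a, ha, hya⟩ := hy
  exact ⟨a, ha, (htri x y a).trans (add_le_add hxy hya)⟩

theorem setOf_exists_near_ne_subset {ι : Type*} (hsymm : ∀ x y, d x y = d y x)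
    (htri : ∀ x y z, d x z ≤ d x y + d y z) (S : ι → Set X) (f : X → ι) (k : ι)
    (hf : ∀ x, x ∈ (expandSet d ε (S k) \ ⋃ k' ∈ {k' : ι | k' ≠ k}, expandSet d ε (S k'))
      → f x = k) :
    {x : X | ∃ x' : X, d x x' ≤ ε ∧ f x' ≠ k} ⊆
      (S k)ᶜ ∪ ⋃ k' ∈ {k' : ι | k' ≠ k}, expandSet d (2 * ε) (S k') := by
  rintro x ⟨x', hxx', hfx'⟩
  by_contra hx
  simp only [Set.mem_union, Set.mem_compl_iff, not_or, not_not, Set.mem_iUnion] at hx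
  obtain ⟨hxS, hxfar⟩ := hx
  refine hfx' (hf x' ⟨mem_expandSet_of_mem hsymm hxS hxx', ?_⟩)
  simp only [Set.mem_iUnion, not_exists]
  intro k' hk' hx'near
  exact hxfar ⟨k', hk', two_mul ε ▸ mem_expandSet_add htri hxx' hx'near⟩

end expandSet

theorem measure_compl_le_of_one_sub_le {X : Type*} [MeasurableSpace X] {μ : Measure X}
    [IsProbabilityMeasure μ] {s : Set X} {δ : ENNReal} (hs : MeasurableSet s)
    (h : 1 - δ ≤ μ s) : μ sᶜ ≤ δ := by
  rw [prob_compl_eq_one_sub hs]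
  exact tsub_le_iff_tsub_le.1 h

/-- Strong localization implies robustness: if each class conditional `q k`
places mass at least `1 - δ` on `S k`, and mass at most `γ` on the `2ε`-expansion
of the other classes' sets, then any classifier predicting `k` on
`C k = (S k)^{+ε} \ ⋃_{k'≠k} (S k')^{+ε}` has unsafe sets of measure at most
`δ + γ`. -/
theorem strong_localization_implies_robust {X : Type*} [MeasurableSpace X]
    (d : X → X → NNReal) (hsymm : ∀ x y, d x y = d y x)
    (htri : ∀ x y z, d x z ≤ d x y + d y z)
    (ε : NNReal) (δ γ : ENNReal) (K : ℕ)
    (q : Fin K → Measure X) (hq : ∀ k, IsProbabilityMeasure (q k))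
    (S : Fin K → Set X) (hSm : ∀ k, MeasurableSet (S k))
    (hS : ∀ k, 1 - δ ≤ q k (S k))
    (hsep : ∀ k, q k (⋃ k' ∈ {k' : Fin K | k' ≠ k}, expandSet d (2 * ε) (S k')) ≤ γ)
    (f : X → Fin K)
    (hf : ∀ k x, x ∈ (expandSet d ε (S k) \ ⋃ k' ∈ {k' : Fin K | k' ≠ k}, expandSet d ε (S k'))
      → f x = k) :
    ∀ k, q k {x : X | ∃ x' : X, d x x' ≤ ε ∧ f x' ≠ k} ≤ δ + γ := by
  intro k
  have := hq k
  calc q k {x : X | ∃ x' : X, d x x' ≤ ε ∧ f x' ≠ k}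
      ≤ q k ((S k)ᶜ ∪ ⋃ k' ∈ {k' : Fin K | k' ≠ k}, expandSet d (2 * ε) (S k')) :=
        measure_mono (setOf_exists_near_ne_subset hsymm htri S f k (hf k))
    _ ≤ q k (S k)ᶜ + q k (⋃ k' ∈ {k' : Fin K | k' ≠ k}, expandSet d (2 * ε) (S k')) :=
        measure_union_le _ _
    _ ≤ δ + γ := add_le_add (measure_compl_le_of_one_sub_le (hSm k) (hS k)) (hsep k)
end
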